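/- arXiv:2509.24612 — 3 statements merged into one kernel-verified Lean document; each statement's English description precedes it below -/
import Mathlib

section
/- For every real k > 0 and every r > 0, the Bessel functions of the first kind satisfy the strict Turán-type inequality J_k(r)^2 − J_{k−1}(r)·J_{k+1}(r) > J_k(r)^2/(k+1). -/
open Real

/-- Bessel function of the first kind of real order `k`, defined by its power series
(valid for `r > 0`, using real powers). -/
noncomputable def besselJ (k r : ℝ) : ℝ :=
  ∑' m : ℕ, ((-1 : ℝ) ^ m / (m.factorial * Real.Gamma (m + k + 1))) * (r / 2) ^ ((2 * m : ℝ) + k)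

/-!
With `t = (r / 2) ^ 2` one has `J_a(r) = (r / 2) ^ a * F_a(t)` for the entire series
`F_a(t) = ∑ (-1)^n t^n / (n! Γ(n + a + 1))`, and the inequality says that
`D_a(t) = a / (a + 1) * F_a(t)^2 - F_{a-1}(t) F_{a+1}(t)` is positive at `a = k`.
The three-term recurrence `F_{a-1} = a F_a - t F_{a+1}` gives
`D_a = 2t / (a + 2) * F_{a+1}^2 + a t / (a + 1) * D_{a+1}`. Iterating, and using that
`D_{k+M}(t) = O(e^{2|t|} / Γ(k + M)^2)`, writes `D_k(t)` as a series with nonnegative terms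
`2k t^{m+1} F_{k+m+1}(t)^2 / ((k + m)(k + m + 2))`. Since `Γ(a + 1) F_a(t) → 1` as `a → ∞`,
one of these terms is positive.
-/

open Filter Topology
open scoped Nat

theorem Real.factorial_mul_Gamma_le_Gamma_nat_add {a : ℝ} (ha : 0 ≤ a) (n : ℕ) :
    n ! * Gamma (a + 1) ≤ Gamma (n + a + 1) := by
  induction n with
  | zero => simp
  | succ n ih =>
    have hpos : 0 < (n : ℝ) + a + 1 := by positivity
    rw [Nat.factorial_succ, Nat.cast_mul, Nat.cast_succ, mul_assoc,
      show (n + 1 : ℝ) + a + 1 = n + a + 1 + 1 by ring, Gamma_add_one hpos.ne']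
    exact mul_le_mul (by linarith) ih (by positivity) hpos.le

theorem Real.Gamma_le_Gamma_add_one {a : ℝ} (ha : 1 ≤ a) : Gamma a ≤ Gamma (a + 1) := by
  rw [Gamma_add_one (by positivity)]
  exact le_mul_of_one_le_left (Gamma_pos_of_pos (by positivity)).le ha

theorem Real.hasSum_pow_div_factorial (x : ℝ) : HasSum (fun n : ℕ => x ^ n / n !) (exp x) := by
  rw [exp_eq_exp_ℝ]
  exact NormedSpace.expSeries_div_hasSum_exp x

noncomputable def besselCoeff (a : ℝ) (n : ℕ) : ℝ :=
  (-1) ^ n / (n ! * Gamma (n + a + 1))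

noncomputable def besselSeries (a t : ℝ) : ℝ :=
  ∑' n : ℕ, besselCoeff a n * t ^ n

theorem besselCoeff_zero (a : ℝ) : besselCoeff a 0 = 1 / Gamma (a + 1) := by
  simp [besselCoeff]

theorem besselCoeff_succ (a : ℝ) (n : ℕ) :
    besselCoeff a (n + 1) = -besselCoeff (a + 1) n / (n + 1) := by
  simp only [besselCoeff, Nat.factorial_succ, Nat.cast_mul, Nat.cast_succ, pow_succ]
  rw [show (n + 1 : ℝ) + a + 1 = n + (a + 1) + 1 by ring]
  field_simp

theorem besselCoeff_eq_mul_besselCoeff_add_one {a : ℝ} {n : ℕ} (h : (n : ℝ) + a + 1 ≠ 0) :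
    besselCoeff a n = (n + a + 1) * besselCoeff (a + 1) n := by
  rw [besselCoeff, besselCoeff, show (n : ℝ) + (a + 1) + 1 = n + a + 1 + 1 by ring,
    Gamma_add_one h]
  field_simp

theorem abs_besselCoeff_mul_pow_le {a : ℝ} (ha : 0 ≤ a) (t : ℝ) (n : ℕ) :
    |besselCoeff a n * t ^ n| ≤ |t| ^ n / n ! / Gamma (a + 1) := by
  have hΓ : 0 < Gamma (a + 1) := Gamma_pos_of_pos (by linarith)
  have hΓn : Gamma (a + 1) ≤ Gamma (n + a + 1) :=
    (le_mul_of_one_le_left hΓ.le (mod_cast n.factorial_pos)).trans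
      (factorial_mul_Gamma_le_Gamma_nat_add ha n)
  rw [besselCoeff, abs_mul, abs_div, abs_pow, abs_neg, abs_one, one_pow, abs_pow,
    abs_of_pos (by positivity), div_div, one_div_mul_eq_div]
  gcongr

theorem summable_besselCoeff_mul_pow {a : ℝ} (ha : 0 ≤ a) (t : ℝ) :
    Summable fun n => besselCoeff a n * t ^ n :=
  .of_norm_bounded ((hasSum_pow_div_factorial |t|).div_const _).summable
    (abs_besselCoeff_mul_pow_le ha t)

theorem abs_besselSeries_le {a : ℝ} (ha : 0 ≤ a) (t : ℝ) :
    |besselSeries a t| ≤ exp |t| / Gamma (a + 1) :=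
  tsum_of_norm_bounded (f := fun n => besselCoeff a n * t ^ n)
    ((hasSum_pow_div_factorial |t|).div_const _) (abs_besselCoeff_mul_pow_le ha t)

theorem abs_besselSeries_sub_one_div_Gamma_le {a : ℝ} (ha : 0 ≤ a) (t : ℝ) :
    |besselSeries a t - 1 / Gamma (a + 1)| ≤ |t| * (exp |t| / Gamma (a + 1 + 1)) := by
  have hs := (summable_besselCoeff_mul_pow ha t).hasSum
  rw [← hasSum_nat_add_iff' 1, Finset.sum_range_one, pow_zero, mul_one, besselCoeff_zero] at hs
  rw [besselSeries, ← hs.tsum_eq]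
  refine tsum_of_norm_bounded (f := fun n => besselCoeff a (n + 1) * t ^ (n + 1))
    (((hasSum_pow_div_factorial |t|).div_const (Gamma (a + 1 + 1))).mul_left |t|) fun n => ?_
  calc ‖besselCoeff a (n + 1) * t ^ (n + 1)‖
      = |t| * |besselCoeff (a + 1) n * t ^ n| / (n + 1) := by
        rw [besselCoeff_succ, Real.norm_eq_abs, pow_succ, abs_mul, abs_mul, abs_div, abs_neg,
          abs_mul, abs_of_pos (by positivity : (0 : ℝ) < n + 1)]
        ring
    _ ≤ |t| * |besselCoeff (a + 1) n * t ^ n| :=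
        div_le_self (by positivity) (by linarith [(n.cast_nonneg : (0 : ℝ) ≤ n)])
    _ ≤ |t| * (|t| ^ n / n ! / Gamma (a + 1 + 1)) := by
        gcongr
        exact abs_besselCoeff_mul_pow_le (by linarith) t n

theorem besselSeries_pos {a t : ℝ} (ha : 0 ≤ a) (h : |t| * exp |t| < a + 1) :
    0 < besselSeries a t := by
  have hΓ : 0 < Gamma (a + 1) := Gamma_pos_of_pos (by linarith)
  have hdev := abs_besselSeries_sub_one_div_Gamma_le ha t
  rw [Gamma_add_one (show a + 1 ≠ 0 by positivity)] at hdev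
  have hlt : |t| * (exp |t| / ((a + 1) * Gamma (a + 1))) < 1 / Gamma (a + 1) :=
    calc |t| * (exp |t| / ((a + 1) * Gamma (a + 1)))
        = |t| * exp |t| / (a + 1) * (1 / Gamma (a + 1)) := by field_simp
      _ < 1 * (1 / Gamma (a + 1)) := by
        gcongr
        rwa [div_lt_one (by positivity)]
      _ = 1 / Gamma (a + 1) := one_mul _
  linarith [neg_abs_le (besselSeries a t - 1 / Gamma (a + 1))]

theorem besselSeries_sub_one {a : ℝ} (ha : 0 < a) (t : ℝ) :
    besselSeries (a - 1) t = a * besselSeries a t - t * besselSeries (a + 1) t := by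
  have hA := (summable_besselCoeff_mul_pow ha.le t).hasSum
  have hB := (summable_besselCoeff_mul_pow (by linarith : 0 ≤ a + 1) t).hasSum
  rw [← hasSum_nat_add_iff' 1, Finset.sum_range_one] at hA
  have hcoeff (n : ℕ) :
      besselCoeff (a - 1) (n + 1) = a * besselCoeff a (n + 1) - besselCoeff (a + 1) n := by
    rw [besselCoeff_succ, besselCoeff_succ, sub_add_cancel,
      besselCoeff_eq_mul_besselCoeff_add_one (by positivity)]
    field_simp
    ring
  have h0 : besselCoeff (a - 1) 0 = a * besselCoeff a 0 := by
    rw [besselCoeff_eq_mul_besselCoeff_add_one (by simpa using ha.ne'), sub_add_cancel]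
    simp
  -- Order `a - 1` may be negative, outside `summable_besselCoeff_mul_pow`; so the series for
  -- `a - 1` is summed through its tail, which the recurrence expresses by orders `a` and `a + 1`.
  have htail : HasSum (fun n => besselCoeff (a - 1) (n + 1) * t ^ (n + 1))
      (a * (besselSeries a t - besselCoeff a 0) - t * besselSeries (a + 1) t) := by
    have h := (hA.mul_left a).sub (hB.mul_left t)
    rw [pow_zero, mul_one] at h
    refine h.congr_fun fun n => ?_
    rw [hcoeff, pow_succ]
    ring
  have hsum := ((hasSum_nat_add_iff (f := fun n => besselCoeff (a - 1) n * t ^ n) 1).mp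
    htail).tsum_eq
  rw [Finset.sum_range_one, h0, pow_zero, mul_one] at hsum
  rw [besselSeries, hsum]
  ring

noncomputable def turanDefect (a t : ℝ) : ℝ :=
  a / (a + 1) * besselSeries a t ^ 2 - besselSeries (a - 1) t * besselSeries (a + 1) t

noncomputable def turanSummand (k t : ℝ) (m : ℕ) : ℝ :=
  2 * k / ((k + m) * (k + m + 2)) * t ^ (m + 1) * besselSeries (k + m + 1) t ^ 2

theorem turanDefect_eq_add_mul_turanDefect_add_one {a : ℝ} (ha : 0 < a) (t : ℝ) :
    turanDefect a t =
      2 / (a + 2) * t * besselSeries (a + 1) t ^ 2 + a / (a + 1) * t * turanDefect (a + 1) t := by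
  have h₀ := besselSeries_sub_one ha t
  have h₁ := besselSeries_sub_one (show 0 < a + 1 by linarith) t
  rw [add_sub_cancel_right, add_assoc, one_add_one_eq_two] at h₁
  rw [turanDefect, turanDefect, add_sub_cancel_right, add_assoc, one_add_one_eq_two, h₀, h₁]
  field_simp
  ring

theorem turanDefect_eq_sum_add {k : ℝ} (hk : 0 < k) (t : ℝ) (M : ℕ) :
    turanDefect k t =
      ∑ m ∈ Finset.range M, turanSummand k t m
        + k / (k + M) * t ^ M * turanDefect (k + M) t := by
  induction M with
  | zero => simp [hk.ne']
  | succ M ih =>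
    rw [ih, Finset.sum_range_succ, turanDefect_eq_add_mul_turanDefect_add_one (by positivity),
      turanSummand, Nat.cast_succ, ← add_assoc, show k + M + 2 = k + M + 1 + 1 by ring]
    field_simp
    ring

theorem abs_turanDefect_le {a : ℝ} (ha : 1 ≤ a) (t : ℝ) :
    |turanDefect a t| ≤ 2 * (exp |t| / Gamma a) ^ 2 := by
  have hΓ : 0 < Gamma a := Gamma_pos_of_pos (by linarith)
  have hΓ₁ : Gamma a ≤ Gamma (a + 1) := Gamma_le_Gamma_add_one ha
  have hΓ₂ : Gamma a ≤ Gamma (a + 1 + 1) := hΓ₁.trans (Gamma_le_Gamma_add_one (by linarith))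
  have hF₀ : |besselSeries (a - 1) t| ≤ exp |t| / Gamma a := by
    simpa using abs_besselSeries_le (show 0 ≤ a - 1 by linarith) t
  have hF₁ : |besselSeries a t| ≤ exp |t| / Gamma a :=
    (abs_besselSeries_le (by linarith) t).trans (by gcongr)
  have hF₂ : |besselSeries (a + 1) t| ≤ exp |t| / Gamma a :=
    (abs_besselSeries_le (by linarith) t).trans (by gcongr)
  have hw : |a / (a + 1)| ≤ 1 := by
    rw [abs_of_nonneg (by positivity), div_le_one (by positivity)]
    linarith
  calc |turanDefect a t|
      ≤ |a / (a + 1)| * |besselSeries a t| ^ 2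
          + |besselSeries (a - 1) t| * |besselSeries (a + 1) t| := by
        rw [turanDefect, ← abs_pow, ← abs_mul, ← abs_mul]
        exact abs_sub _ _
    _ ≤ 1 * (exp |t| / Gamma a) ^ 2 + (exp |t| / Gamma a) * (exp |t| / Gamma a) := by
        gcongr
    _ = 2 * (exp |t| / Gamma a) ^ 2 := by ring

theorem tendsto_turanDefect_remainder {k : ℝ} (hk : 0 < k) (t : ℝ) :
    Tendsto (fun M : ℕ => k / (k + M) * t ^ M * turanDefect (k + M) t) atTop (𝓝 0) := by
  rw [← tendsto_add_atTop_iff_nat 1]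
  have hΓ : 0 < Gamma (k + 1) := Gamma_pos_of_pos (by linarith)
  set C := 2 * |t| * (exp |t| / Gamma (k + 1)) ^ 2 with hC
  have hlim : Tendsto (fun M : ℕ => C * (|t| ^ M / M !)) atTop (𝓝 0) := by
    simpa using (FloorSemiring.tendsto_pow_div_factorial_atTop |t|).const_mul C
  refine squeeze_zero_norm (fun M => ?_) hlim
  have hM : (M ! : ℝ) * Gamma (k + 1) ≤ Gamma (k + ↑(M + 1)) := by
    convert factorial_mul_Gamma_le_Gamma_nat_add hk.le M using 2
    push_cast
    ring
  have hw : k / (k + ↑(M + 1)) ≤ 1 := by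
    rw [div_le_one (by positivity)]
    linarith [(M + 1).cast_nonneg (α := ℝ)]
  have hfac : (1 : ℝ) ≤ M ! := mod_cast M.factorial_pos
  calc ‖k / (k + ↑(M + 1)) * t ^ (M + 1) * turanDefect (k + ↑(M + 1)) t‖
      = k / (k + ↑(M + 1)) * |t| ^ (M + 1) * |turanDefect (k + ↑(M + 1)) t| := by
        rw [Real.norm_eq_abs, abs_mul, abs_mul, abs_pow,
          abs_of_nonneg (by positivity : 0 ≤ k / _)]
    _ ≤ 1 * |t| ^ (M + 1) * (2 * (exp |t| / Gamma (k + ↑(M + 1))) ^ 2) := by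
        gcongr
        exact abs_turanDefect_le (by push_cast; linarith [M.cast_nonneg (α := ℝ)]) t
    _ ≤ 1 * |t| ^ (M + 1) * (2 * (exp |t| / (M ! * Gamma (k + 1))) ^ 2) := by
        gcongr
    _ = C * (|t| ^ M / M !) / M ! := by
        rw [hC]
        field_simp
        ring
    _ ≤ C * (|t| ^ M / M !) := div_le_self (by positivity) hfac

theorem turanSummand_nonneg {k t : ℝ} (hk : 0 < k) (ht : 0 ≤ t) (m : ℕ) :
    0 ≤ turanSummand k t m := by
  unfold turanSummand
  positivity

theorem hasSum_turanSummand {k t : ℝ} (hk : 0 < k) (ht : 0 ≤ t) :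
    HasSum (turanSummand k t) (turanDefect k t) := by
  rw [hasSum_iff_tendsto_nat_of_nonneg (turanSummand_nonneg hk ht)]
  have h := tendsto_const_nhds (x := turanDefect k t) |>.sub (tendsto_turanDefect_remainder hk t)
  rw [sub_zero] at h
  refine h.congr fun M => ?_
  rw [turanDefect_eq_sum_add hk t M, add_sub_cancel_right]

theorem turanDefect_pos {k t : ℝ} (hk : 0 < k) (ht : 0 < t) : 0 < turanDefect k t := by
  obtain ⟨j, hj⟩ := exists_nat_gt (t * exp t)
  have hF : 0 < besselSeries (k + j + 1) t :=
    besselSeries_pos (by positivity) (by rw [abs_of_pos ht]; linarith)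
  rw [← (hasSum_turanSummand hk ht.le).tsum_eq]
  exact (hasSum_turanSummand hk ht.le).summable.tsum_pos (turanSummand_nonneg hk ht.le) j
    (by unfold turanSummand; positivity)

theorem besselJ_eq_rpow_mul_besselSeries (a : ℝ) {r : ℝ} (hr : 0 < r) :
    besselJ a r = (r / 2) ^ a * besselSeries a ((r / 2) ^ 2) := by
  rw [besselJ, besselSeries, ← tsum_mul_left]
  refine tsum_congr fun m => ?_
  rw [besselCoeff, rpow_add (by positivity), ← pow_mul,
    show (2 * m : ℝ) = ((2 * m : ℕ) : ℝ) by push_cast; ring, rpow_natCast]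
  ring

/-- Strict Turán-type inequality for Bessel functions. -/
theorem besselJ_turan_inequality (k r : ℝ) (hk : 0 < k) (hr : 0 < r) :
    besselJ k r ^ 2 - besselJ (k - 1) r * besselJ (k + 1) r > besselJ k r ^ 2 / (k + 1) := by
  have hx : 0 < r / 2 := by positivity
  have hpow : (r / 2) ^ (k - 1) * (r / 2) ^ (k + 1) = ((r / 2) ^ k) ^ 2 := by
    rw [← rpow_add hx, ← rpow_natCast, ← rpow_mul hx.le]
    ring_nf
  have hD := turanDefect_pos hk (by positivity : 0 < (r / 2) ^ 2)
  rw [gt_iff_lt, ← sub_pos]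
  simp only [besselJ_eq_rpow_mul_besselSeries _ hr]
  set t := (r / 2) ^ 2
  calc 0 < ((r / 2) ^ k) ^ 2 * turanDefect k t := by positivity
    _ = _ := by
      unfold turanDefect
      field_simp
      linear_combination ((k + 1) * besselSeries (k - 1) t * besselSeries (k + 1) t) * hpow
end

section
/- Fix a real k > −1 and let a < b be consecutive positive zeros of J_{k+1} (i.e. 0 < a < b, J_{k+1}(a) = J_{k+1}(b) = 0, and J_{k+1}(r) ≠ 0 for all r in (a,b)). Then there exists exactly one c in the open interval (a, b) with J_k(c) = 0. -/
open Real

namespace BesselAux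

/-- The `m`-th term of the Bessel series. -/
noncomputable def bT (k r : ℝ) (m : ℕ) : ℝ :=
  ((-1 : ℝ) ^ m / (m.factorial * Real.Gamma (m + k + 1))) * (r / 2) ^ ((2 * m : ℝ) + k)

lemma besselJ_eq (k r : ℝ) : besselJ k r = ∑' m, bT k r m := rfl

lemma gpos {k : ℝ} (hk : -1 < k) (m : ℕ) : 0 < Real.Gamma ((m : ℝ) + k + 1) :=
  Real.Gamma_pos_of_pos (by have := Nat.cast_nonneg (α := ℝ) m; linarith)

lemma gRec {k : ℝ} (hk : -1 < k) (m : ℕ) :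
    Real.Gamma ((m : ℝ) + k + 1 + 1) = ((m : ℝ) + k + 1) * Real.Gamma ((m : ℝ) + k + 1) :=
  Real.Gamma_add_one (ne_of_gt (by have := Nat.cast_nonneg (α := ℝ) m; linarith))

lemma summable_P (k : ℝ) (R : ℝ) (hk : -1 < k) :
    Summable (fun m : ℕ => R ^ (2 * m) / (m.factorial * Real.Gamma (m + k + 1))) := by
  apply summable_of_ratio_norm_eventually_le (r := 1/2) (by norm_num)
  filter_upwards [Filter.eventually_ge_atTop ⌈2 * R ^ 2⌉₊] with m hm
  have hm' : 2 * R ^ 2 ≤ (m : ℝ) := Nat.ceil_le.mp hm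
  have hΓ : 0 < Real.Gamma ((m : ℝ) + k + 1) := gpos hk m
  have hmn : (0:ℝ) ≤ (m:ℝ) := Nat.cast_nonneg m
  have hΓ' : Real.Gamma (((m + 1 : ℕ) : ℝ) + k + 1)
      = ((m : ℝ) + k + 1) * Real.Gamma ((m : ℝ) + k + 1) := by
    rw [show (((m + 1 : ℕ) : ℝ) + k + 1) = ((m : ℝ) + k + 1 + 1) by push_cast; ring, gRec hk]
  have hfac : (((m + 1).factorial : ℕ) : ℝ) = ((m : ℝ) + 1) * (m.factorial : ℝ) := by
    rw [Nat.factorial_succ]; push_cast; ring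
  have hfacpos : (0:ℝ) < (m.factorial : ℝ) := by exact_mod_cast m.factorial_pos
  have key : R ^ (2 * (m + 1)) / ((m + 1).factorial * Real.Gamma (((m + 1 : ℕ) : ℝ) + k + 1))
      = (R ^ 2 / (((m : ℝ) + 1) * ((m : ℝ) + k + 1)))
        * (R ^ (2 * m) / (m.factorial * Real.Gamma ((m : ℝ) + k + 1))) := by
    rw [hΓ', hfac, show 2 * (m + 1) = 2 * m + 2 by ring, pow_add]
    field_simp
  calc ‖R ^ (2 * (m + 1)) / (((m + 1).factorial : ℝ) * Real.Gamma (((m + 1 : ℕ) : ℝ) + k + 1))‖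
      = ‖R ^ 2 / (((m : ℝ) + 1) * ((m : ℝ) + k + 1))‖
        * ‖R ^ (2 * m) / ((m.factorial : ℝ) * Real.Gamma ((m : ℝ) + k + 1))‖ := by
        rw [key, norm_mul]
    _ ≤ (1/2) * ‖R ^ (2 * m) / ((m.factorial : ℝ) * Real.Gamma ((m : ℝ) + k + 1))‖ := by
        apply mul_le_mul_of_nonneg_right _ (norm_nonneg _)
        rw [Real.norm_eq_abs, abs_of_nonneg (div_nonneg (by positivity) (by nlinarith)), div_le_iff₀ (by nlinarith)]
        nlinarith

/-- Split `y ^ (2m + s)` as natural power times rpow. -/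
lemma rpow_split {y : ℝ} (hy : 0 < y) (m : ℕ) (s : ℝ) :
    y ^ (2 * (m : ℝ) + s) = y ^ (2 * m) * y ^ s := by
  rw [Real.rpow_add hy]
  congr 1
  rw [← Real.rpow_natCast y (2 * m)]
  congr 1
  push_cast; ring

lemma pow_mul_bT {y : ℝ} (hy : 0 < y) (q k : ℝ) (m : ℕ) :
    y ^ q * bT k y m =
      (2 : ℝ) ^ q * ((-1 : ℝ) ^ m *
        ((y / 2) ^ (2 * m) * (y / 2) ^ (q + k) / (m.factorial * Real.Gamma (m + k + 1)))) := by
  have h2 : (0 : ℝ) < y / 2 := by linarith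
  have e1 : y ^ q = 2 ^ q * (y / 2) ^ q := by
    nth_rewrite 1 [show y = 2 * (y / 2) by ring]
    rw [Real.mul_rpow (by norm_num) h2.le]
  have e2 : (y / 2) ^ (2 * (m : ℝ) + k) = (y / 2) ^ (2 * m) * (y / 2) ^ k :=
    rpow_split h2 m k
  have e3 : (y / 2) ^ q * (y / 2) ^ k = (y / 2) ^ (q + k) := (Real.rpow_add h2 q k).symm
  unfold bT
  rw [e1, e2, ← e3]
  ring

lemma abs_pow_mul_bT {y : ℝ} (hy : 0 < y) {k : ℝ} (hk : -1 < k) (q : ℝ) (m : ℕ) :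
    |y ^ q * bT k y m| =
      (2 : ℝ) ^ q * ((y / 2) ^ (2 * m) * (y / 2) ^ (q + k)
        / (m.factorial * Real.Gamma (m + k + 1))) := by
  have h2 : (0 : ℝ) < y / 2 := by linarith
  have hΓ : 0 < Real.Gamma ((m : ℝ) + k + 1) := gpos hk m
  rw [pow_mul_bT hy q k m, abs_mul, abs_mul, abs_pow, abs_neg, abs_one, one_pow, one_mul,
    abs_of_nonneg (Real.rpow_nonneg (by norm_num) q),
    abs_of_nonneg (div_nonneg (by positivity) (by positivity))]

lemma summable_pow_mul_bT (k q : ℝ) (hk : -1 < k) {y : ℝ} (hy : 0 < y) :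
    Summable (fun m => y ^ q * bT k y m) := by
  apply Summable.of_norm
  apply ((summable_P k (y / 2) hk).mul_left ((2 : ℝ) ^ q * (y / 2) ^ (q + k))).congr
  intro m
  rw [Real.norm_eq_abs, abs_pow_mul_bT hy hk q m]
  ring

lemma summable_bT {k : ℝ} (hk : -1 < k) {y : ℝ} (hy : 0 < y) : Summable (bT k y) := by
  apply (summable_pow_mul_bT k 0 hk hy).congr
  intro m
  rw [Real.rpow_zero, one_mul]

lemma hasDerivAt_CP {C p x : ℝ} (hx : 0 < x) :
    HasDerivAt (fun r : ℝ => C * (r / 2) ^ p) (C * (1 / 2 * p * (x / 2) ^ (p - 1))) x := by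
  have h1 : HasDerivAt (fun r : ℝ => r / 2) (1 / 2) x := by
    simpa using (hasDerivAt_id x).div_const 2
  have h2 := h1.rpow_const (p := p) (Or.inl (by positivity))
  exact h2.const_mul C

lemma hasDerivAt_term_F (k : ℝ) (hk : -1 < k) (m : ℕ) {x : ℝ} (hx : 0 < x) :
    HasDerivAt (fun r => r ^ (k + 1) * bT (k + 1) r m) (x ^ (k + 1) * bT k x m) x := by
  have hk1 : (-1 : ℝ) < k + 1 := by linarith
  set C : ℝ := 2 ^ (k + 1) * ((-1 : ℝ) ^ m / (m.factorial * Real.Gamma ((m : ℝ) + (k + 1) + 1)))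
    with hC
  set p : ℝ := 2 * (m : ℝ) + (2 * k + 2) with hp
  have hΓ : 0 < Real.Gamma ((m : ℝ) + k + 1) := gpos hk m
  have hmn : (0:ℝ) ≤ (m:ℝ) := Nat.cast_nonneg m
  have hpt : ∀ y : ℝ, 0 < y → y ^ (k + 1) * bT (k + 1) y m = C * (y / 2) ^ p := by
    intro y hy
    have h2 : (0 : ℝ) < y / 2 := by linarith
    rw [pow_mul_bT hy (k + 1) (k + 1) m, hp, rpow_split h2 m (2 * k + 2),
      show (k + 1) + (k + 1) = 2 * k + 2 by ring, hC]
    ring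
  have heq : (fun r => r ^ (k + 1) * bT (k + 1) r m) =ᶠ[nhds x] fun r => C * (r / 2) ^ p := by
    filter_upwards [eventually_gt_nhds hx] with r hr using hpt r hr
  have hder := hasDerivAt_CP (C := C) (p := p) hx
  refine (hder.congr_of_eventuallyEq heq).congr_deriv ?_
  -- identify the derivative value
  have h2 : (0 : ℝ) < x / 2 := by linarith
  have hΓr : Real.Gamma ((m : ℝ) + (k + 1) + 1)
      = ((m : ℝ) + k + 1) * Real.Gamma ((m : ℝ) + k + 1) := by
    rw [show (m : ℝ) + (k + 1) + 1 = (m : ℝ) + k + 1 + 1 by ring, gRec hk]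
  have hfacpos : (0:ℝ) < (m.factorial : ℝ) := by exact_mod_cast m.factorial_pos
  have hne1 : ((m : ℝ) + k + 1) ≠ 0 := by linarith
  have hco : (-1 : ℝ) ^ m / ((m.factorial : ℝ) * (((m : ℝ) + k + 1) * Real.Gamma ((m : ℝ) + k + 1)))
      * (1 / 2 * (2 * (m : ℝ) + (2 * k + 2)))
      = (-1 : ℝ) ^ m / ((m.factorial : ℝ) * Real.Gamma ((m : ℝ) + k + 1)) := by
    field_simp
    ring
  rw [pow_mul_bT hx (k + 1) k m, hC, hp,
    show 2 * (m : ℝ) + (2 * k + 2) - 1 = 2 * (m : ℝ) + (2 * k + 1) by ring,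
    rpow_split h2 m (2 * k + 1), show (k + 1) + k = 2 * k + 1 by ring, hΓr]
  linear_combination (2 ^ (k+1) * ((x / 2 : ℝ) ^ (2 * m) * (x / 2) ^ (2 * k + 1))) * hco

/-- Derivative of the `m`-th term of `r ↦ r ^ (-k) * J_k r`. -/
noncomputable def Gd (k x : ℝ) : ℕ → ℝ
  | 0 => 0
  | (m + 1) => -(x ^ (-k) * bT (k + 1) x m)

lemma hasDerivAt_term_G (k : ℝ) (hk : -1 < k) (m : ℕ) {x : ℝ} (hx : 0 < x) :
    HasDerivAt (fun r => r ^ (-k) * bT k r m) (Gd k x m) x := by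
  have hmn : (0:ℝ) ≤ (m:ℝ) := Nat.cast_nonneg m
  have h2 : (0 : ℝ) < x / 2 := by linarith
  match m with
  | 0 =>
    have hpt : ∀ y : ℝ, 0 < y →
        y ^ (-k) * bT k y 0 = 2 ^ (-k) * ((1 : ℝ) / (Real.Gamma ((0:ℕ) + k + 1))) := by
      intro y hy
      rw [pow_mul_bT hy (-k) k 0, show -k + k = 0 by ring, Real.rpow_zero]
      norm_num
    have heq : (fun r => r ^ (-k) * bT k r 0)
        =ᶠ[nhds x] fun _ => 2 ^ (-k) * ((1 : ℝ) / (Real.Gamma ((0:ℕ) + k + 1))) := by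
      filter_upwards [eventually_gt_nhds hx] with r hr using hpt r hr
    exact (hasDerivAt_const x _).congr_of_eventuallyEq heq
  | (m + 1) =>
    have hk1 : (-1 : ℝ) < k + 1 := by linarith
    set C : ℝ := 2 ^ (-k) *
      ((-1 : ℝ) ^ (m + 1) / (((m+1).factorial : ℝ) * Real.Gamma (((m+1:ℕ) : ℝ) + k + 1))) with hC
    set p : ℝ := 2 * ((m + 1 : ℕ) : ℝ) + 0 with hp
    have hpt : ∀ y : ℝ, 0 < y → y ^ (-k) * bT k y (m + 1) = C * (y / 2) ^ p := by
      intro y hy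
      have hy2 : (0 : ℝ) < y / 2 := by linarith
      rw [pow_mul_bT hy (-k) k (m + 1), show -k + k = 0 by ring, hp,
        rpow_split hy2 (m + 1) 0, hC]
      ring
    have heq : (fun r => r ^ (-k) * bT k r (m + 1)) =ᶠ[nhds x] fun r => C * (r / 2) ^ p := by
      filter_upwards [eventually_gt_nhds hx] with r hr using hpt r hr
    have hder := hasDerivAt_CP (C := C) (p := p) hx
    refine (hder.congr_of_eventuallyEq heq).congr_deriv ?_
    show C * (1 / 2 * p * (x / 2) ^ (p - 1)) = Gd k x (m + 1)
    have hΓr : Real.Gamma (((m+1:ℕ) : ℝ) + k + 1)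
        = ((m : ℝ) + k + 1) * Real.Gamma ((m : ℝ) + k + 1) := by
      rw [show (((m+1:ℕ)) : ℝ) + k + 1 = (m : ℝ) + k + 1 + 1 by push_cast; ring, gRec hk]
    have hfac : (((m + 1).factorial : ℕ) : ℝ) = ((m : ℝ) + 1) * (m.factorial : ℝ) := by
      rw [Nat.factorial_succ]; push_cast; ring
    have hΓ : 0 < Real.Gamma ((m : ℝ) + k + 1) := gpos hk m
    have hfacpos : (0:ℝ) < (m.factorial : ℝ) := by exact_mod_cast m.factorial_pos
    have hne1 : ((m : ℝ) + k + 1) ≠ 0 := by linarith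
    have hΓrG : Real.Gamma ((m : ℝ) + (k + 1) + 1)
        = ((m : ℝ) + k + 1) * Real.Gamma ((m : ℝ) + k + 1) := by
      rw [show (m : ℝ) + (k + 1) + 1 = (m : ℝ) + k + 1 + 1 by ring, gRec hk]
    show C * (1 / 2 * p * (x / 2) ^ (p - 1)) = -(x ^ (-k) * bT (k + 1) x m)
    rw [pow_mul_bT hx (-k) (k + 1) m, show -k + (k + 1) = 1 by ring, hΓrG, hC, hp, hΓr, hfac,
      show 2 * ((m + 1 : ℕ) : ℝ) + 0 - 1 = 2 * (m : ℝ) + 1 by push_cast; ring,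
      rpow_split h2 m 1, pow_succ]
    have hco : (-1 : ℝ) ^ (m + 1) / (((m : ℝ) + 1) * (m.factorial : ℝ)
          * (((m : ℝ) + k + 1) * Real.Gamma ((m : ℝ) + k + 1)))
        * (1 / 2 * (2 * ((m + 1 : ℕ) : ℝ) + 0))
        = -((-1 : ℝ) ^ m / ((m.factorial : ℝ)
            * (((m : ℝ) + k + 1) * Real.Gamma ((m : ℝ) + k + 1)))) := by
      push_cast
      field_simp
      ring
    linear_combination (2 ^ (-k : ℝ) * ((x / 2 : ℝ) ^ (2 * m) * (x / 2) ^ (1:ℝ))) * hco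

lemma rpow_bound {e R y : ℝ} (he : 0 < e) (hy1 : e ≤ y) (hy2 : y ≤ R) (s : ℝ) :
    y ^ s ≤ e ^ s + R ^ s := by
  rcases le_or_gt 0 s with hs | hs
  · have h1 : y ^ s ≤ R ^ s := Real.rpow_le_rpow (by linarith) hy2 hs
    have h2 : 0 ≤ e ^ s := Real.rpow_nonneg he.le s
    linarith
  · have h1 : y ^ s ≤ e ^ s := Real.rpow_le_rpow_of_nonpos he hy1 hs.le
    have h2 : 0 ≤ R ^ s := Real.rpow_nonneg (by linarith) s
    linarith

lemma hasDerivAt_F (k : ℝ) (hk : -1 < k) {x : ℝ} (hx : 0 < x) :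
    HasDerivAt (fun r => r ^ (k + 1) * besselJ (k + 1) r)
      (x ^ (k + 1) * besselJ k x) x := by
  have hk1 : (-1 : ℝ) < k + 1 := by linarith
  have hfun : (fun r : ℝ => r ^ (k + 1) * besselJ (k + 1) r)
      = fun r : ℝ => ∑' m, r ^ (k + 1) * bT (k + 1) r m := by
    funext r; rw [besselJ_eq, tsum_mul_left]
  have hder : x ^ (k + 1) * besselJ k x = ∑' m, x ^ (k + 1) * bT k x m := by
    rw [besselJ_eq, tsum_mul_left]
  rw [hfun, hder]
  set u : ℕ → ℝ := fun n => 2 ^ (k + 1) * (((x + 1) / 2) ^ (2 * n)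
      * ((x / 4) ^ (k + 1 + k) + ((x + 1) / 2) ^ (k + 1 + k))
      / (n.factorial * Real.Gamma (n + k + 1))) with hu
  have husum : Summable u := by
    apply ((summable_P k ((x + 1) / 2) hk).mul_left
      (2 ^ (k + 1) * ((x / 4) ^ (k + 1 + k) + ((x + 1) / 2) ^ (k + 1 + k)))).congr
    intro n
    rw [hu]
    ring
  apply hasDerivAt_tsum_of_isPreconnected husum (isOpen_Ioo (a := x / 2) (b := x + 1))
    (convex_Ioo _ _).isPreconnected
    (fun n y hy => hasDerivAt_term_F k hk n (lt_trans (by linarith) hy.1))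
    ?_ (Set.mem_Ioo.mpr ⟨by linarith, by linarith⟩)
    (summable_pow_mul_bT (k + 1) (k + 1) hk1 hx)
    (Set.mem_Ioo.mpr ⟨by linarith, by linarith⟩)
  · intro n y hy
    obtain ⟨hy1, hy2⟩ := hy
    have hy0 : 0 < y := lt_trans (by linarith) hy1
    rw [Real.norm_eq_abs, abs_pow_mul_bT hy0 hk (k + 1) n, hu]
    have hb1 : (y / 2) ^ (2 * n) ≤ ((x + 1) / 2) ^ (2 * n) :=
      pow_le_pow_left₀ (by linarith) (by linarith) _
    have hb2 : (y / 2) ^ (k + 1 + k) ≤ (x / 4) ^ (k + 1 + k) + ((x + 1) / 2) ^ (k + 1 + k) :=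
      rpow_bound (by linarith) (by linarith) (by linarith) _
    have hΓ : 0 < Real.Gamma ((n : ℝ) + k + 1) := gpos hk n
    have h2p : (0:ℝ) < 2 ^ (k+1) := Real.rpow_pos_of_pos (by norm_num) _
    have hfacpos : (0:ℝ) < (n.factorial : ℝ) := by exact_mod_cast n.factorial_pos
    have hnum : (y / 2) ^ (2 * n) * (y / 2) ^ (k + 1 + k)
        ≤ ((x + 1) / 2) ^ (2 * n) * ((x / 4) ^ (k + 1 + k) + ((x + 1) / 2) ^ (k + 1 + k)) :=
      mul_le_mul hb1 hb2 (Real.rpow_nonneg (by linarith) _) (by positivity)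
    have hden : (0:ℝ) < (n.factorial : ℝ) * Real.Gamma ((n : ℝ) + k + 1) := by positivity
    exact mul_le_mul_of_nonneg_left (div_le_div_of_nonneg_right hnum hden.le) h2p.le

lemma hasDerivAt_G (k : ℝ) (hk : -1 < k) {x : ℝ} (hx : 0 < x) :
    HasDerivAt (fun r => r ^ (-k) * besselJ k r)
      (-(x ^ (-k) * besselJ (k + 1) x)) x := by
  have hk1 : (-1 : ℝ) < k + 1 := by linarith
  have hfun : (fun r : ℝ => r ^ (-k) * besselJ k r)
      = fun r : ℝ => ∑' m, r ^ (-k) * bT k r m := by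
    funext r; rw [besselJ_eq, tsum_mul_left]
  rw [hfun]
  set u : ℕ → ℝ := fun n => Nat.rec 0 (fun m _ => 2 ^ (-k) * (((x + 1) / 2) ^ (2 * m)
      * ((x / 4) ^ (-k + (k + 1)) + ((x + 1) / 2) ^ (-k + (k + 1)))
      / (m.factorial * Real.Gamma (m + (k + 1) + 1)))) n with hu
  have husum : Summable u := by
    rw [← summable_nat_add_iff 1]
    apply ((summable_P (k + 1) ((x + 1) / 2) hk1).mul_left
      (2 ^ (-k) * ((x / 4) ^ (-k + (k + 1)) + ((x + 1) / 2) ^ (-k + (k + 1))))).congr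
    intro n
    show _ = u (n + 1)
    rw [hu]
    ring
  have key : HasDerivAt (fun z => ∑' m, z ^ (-k) * bT k z m) (∑' m, Gd k x m) x := by
    apply hasDerivAt_tsum_of_isPreconnected husum (isOpen_Ioo (a := x / 2) (b := x + 1))
      (convex_Ioo _ _).isPreconnected
      (fun n y hy => hasDerivAt_term_G k hk n (lt_trans (by linarith) hy.1))
      ?_ (Set.mem_Ioo.mpr ⟨by linarith, by linarith⟩)
      (summable_pow_mul_bT k (-k) hk hx)
      (Set.mem_Ioo.mpr ⟨by linarith, by linarith⟩)
    · intro n y hy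
      obtain ⟨hy1, hy2⟩ := hy
      have hy0 : 0 < y := lt_trans (by linarith) hy1
      match n with
      | 0 => simp [Gd, hu]
      | (n + 1) =>
        show ‖-(y ^ (-k) * bT (k + 1) y n)‖ ≤ u (n + 1)
        rw [norm_neg, Real.norm_eq_abs, abs_pow_mul_bT hy0 hk1 (-k) n]
        show _ ≤ 2 ^ (-k) * (((x + 1) / 2) ^ (2 * n)
          * ((x / 4) ^ (-k + (k + 1)) + ((x + 1) / 2) ^ (-k + (k + 1)))
          / (n.factorial * Real.Gamma (n + (k + 1) + 1)))
        have hb1 : (y / 2) ^ (2 * n) ≤ ((x + 1) / 2) ^ (2 * n) :=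
          pow_le_pow_left₀ (by linarith) (by linarith) _
        have hb2 : (y / 2) ^ (-k + (k + 1))
            ≤ (x / 4) ^ (-k + (k + 1)) + ((x + 1) / 2) ^ (-k + (k + 1)) :=
          rpow_bound (by linarith) (by linarith) (by linarith) _
        have hΓ : 0 < Real.Gamma ((n : ℝ) + (k + 1) + 1) := gpos hk1 n
        have h2p : (0:ℝ) < 2 ^ (-k : ℝ) := Real.rpow_pos_of_pos (by norm_num) _
        have hfacpos : (0:ℝ) < (n.factorial : ℝ) := by exact_mod_cast n.factorial_pos
        have hnum : (y / 2) ^ (2 * n) * (y / 2) ^ (-k + (k + 1))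
            ≤ ((x + 1) / 2) ^ (2 * n)
              * ((x / 4) ^ (-k + (k + 1)) + ((x + 1) / 2) ^ (-k + (k + 1))) :=
          mul_le_mul hb1 hb2 (Real.rpow_nonneg (by linarith) _) (by positivity)
        have hden : (0:ℝ) < (n.factorial : ℝ) * Real.Gamma ((n : ℝ) + (k + 1) + 1) := by
          positivity
        exact mul_le_mul_of_nonneg_left (div_le_div_of_nonneg_right hnum hden.le) h2p.le
  refine key.congr_deriv ?_
  have hs1 : Summable (fun n => Gd k x (n + 1)) := by
    apply ((summable_pow_mul_bT (k + 1) (-k) hk1 hx).neg).congr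
    intro n
    rfl
  have hs0 : Summable (Gd k x) := (summable_nat_add_iff 1).mp hs1
  rw [Summable.tsum_eq_zero_add hs0]
  show Gd k x 0 + ∑' n, -(x ^ (-k) * bT (k + 1) x n) = _
  rw [show Gd k x 0 = 0 from rfl, zero_add, tsum_neg, tsum_mul_left, besselJ_eq]

end BesselAux

open BesselAux

/-- Between consecutive positive zeros of `J_{k+1}` there is exactly one zero of `J_k`. -/
theorem besselJ_existsUnique_zero_between (k : ℝ) (hk : -1 < k) (a b : ℝ)
    (ha : 0 < a) (hab : a < b)
    (hza : besselJ (k + 1) a = 0) (hzb : besselJ (k + 1) b = 0)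
    (hne : ∀ r ∈ Set.Ioo a b, besselJ (k + 1) r ≠ 0) :
    ∃! c, c ∈ Set.Ioo a b ∧ besselJ k c = 0 := by
  -- Existence: Rolle's theorem applied to `r ↦ r ^ (k+1) * J_{k+1} r`.
  have hF : ∀ y ∈ Set.Icc a b, HasDerivAt (fun r => r ^ (k + 1) * besselJ (k + 1) r)
      (y ^ (k + 1) * besselJ k y) y :=
    fun y hy => hasDerivAt_F k hk (lt_of_lt_of_le ha hy.1)
  have hFc : ContinuousOn (fun r => r ^ (k + 1) * besselJ (k + 1) r) (Set.Icc a b) :=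
    fun y hy => ((hF y hy).continuousAt).continuousWithinAt
  have hFab : (fun r => r ^ (k + 1) * besselJ (k + 1) r) a
      = (fun r => r ^ (k + 1) * besselJ (k + 1) r) b := by simp [hza, hzb]
  obtain ⟨c, hc, hc0⟩ := exists_hasDerivAt_eq_zero hab hFc hFab
    (fun y hy => hF y (Set.mem_Icc_of_Ioo hy))
  have hJc : besselJ k c = 0 := by
    have hcp : (0:ℝ) < c ^ (k + 1) := Real.rpow_pos_of_pos (lt_trans ha hc.1) (k + 1)
    rcases mul_eq_zero.mp hc0 with h | h
    · exact absurd h (ne_of_gt hcp)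
    · exact h
  -- Uniqueness: Rolle's theorem applied to `r ↦ r ^ (-k) * J_k r`.
  have huniq : ∀ u v, u ∈ Set.Ioo a b → v ∈ Set.Ioo a b →
      besselJ k u = 0 → besselJ k v = 0 → u < v → False := by
    intro u v hu hv hJu hJv huv
    have hu0 : 0 < u := lt_trans ha hu.1
    have hG : ∀ y ∈ Set.Icc u v, HasDerivAt (fun r => r ^ (-k) * besselJ k r)
        (-(y ^ (-k) * besselJ (k + 1) y)) y :=
      fun y hy => hasDerivAt_G k hk (lt_of_lt_of_le hu0 hy.1)
    have hGc : ContinuousOn (fun r => r ^ (-k) * besselJ k r) (Set.Icc u v) :=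
      fun y hy => ((hG y hy).continuousAt).continuousWithinAt
    have hGab : (fun r => r ^ (-k) * besselJ k r) u
        = (fun r => r ^ (-k) * besselJ k r) v := by simp [hJu, hJv]
    obtain ⟨d, hd, hd0⟩ := exists_hasDerivAt_eq_zero huv hGc hGab
      (fun y hy => hG y (Set.mem_Icc_of_Ioo hy))
    have hd0' : besselJ (k + 1) d = 0 := by
      have hdp : (0:ℝ) < d ^ (-k) := Real.rpow_pos_of_pos (lt_trans hu0 hd.1) (-k)
      rcases mul_eq_zero.mp (neg_eq_zero.mp hd0) with h | h
      · exact absurd h (ne_of_gt hdp)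
      · exact h
    exact hne d ⟨lt_trans hu.1 hd.1, lt_trans hd.2 hv.2⟩ hd0'
  refine ⟨c, ⟨hc, hJc⟩, ?_⟩
  rintro y ⟨hy, hJy⟩
  rcases lt_trichotomy y c with h | h | h
  · exact (huniq y c hy hc hJy hJc h).elim
  · exact h
  · exact (huniq c y hc hy hJc hJy h).elim
end

section
/- For every real k > −1 and every r > 0, the identity r⁵·J_{k+6}(r) = (16(k+5)(k+4)(k+3)(k+2) − 12(k+3)(k+4)·r² + r⁴)·(2(k+1)·J_{k+1}(r) − r·J_k(r)) − 4(k+4)·(2(k+3)(k+5) − r²)·r²·J_{k+1}(r) holds. -/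
open Real

noncomputable def bterm (k r : ℝ) (m : ℕ) : ℝ :=
  ((-1 : ℝ) ^ m / (m.factorial * Real.Gamma (m + k + 1))) * (r / 2) ^ ((2 * m : ℝ) + k)

lemma besselJ_eq_tsum (k r : ℝ) : besselJ k r = ∑' m, bterm k r m := rfl

lemma gamma_pos (k : ℝ) (hk : -1 < k) (m : ℕ) : 0 < Real.Gamma ((m : ℝ) + k + 1) :=
  Real.Gamma_pos_of_pos (by have : (0:ℝ) ≤ m := Nat.cast_nonneg m; linarith)

lemma bterm_succ (k r : ℝ) (hk : -1 < k) (hr : 0 < r) (m : ℕ) :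
    bterm k r (m + 1) = bterm k r m * (-((r/2)^2) / ((m + 1) * ((m : ℝ) + k + 1))) := by
  have hG : Real.Gamma ((↑(m+1) : ℝ) + k + 1) = ((m : ℝ) + k + 1) * Real.Gamma ((m : ℝ) + k + 1) := by
    have h1 : ((↑(m+1) : ℝ) + k + 1) = ((m : ℝ) + k + 1) + 1 := by push_cast; ring
    rw [h1, Real.Gamma_add_one (ne_of_gt (by have : (0:ℝ) ≤ m := Nat.cast_nonneg m; linarith))]
  have hpow : (r/2 : ℝ) ^ ((2 * (↑(m+1) : ℝ)) + k) = (r/2) ^ ((2 * (m:ℝ)) + k) * (r/2)^(2:ℕ) := by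
    have h1 : (2 * (↑(m+1) : ℝ)) + k = ((2 * (m:ℝ)) + k) + (2:ℕ) := by push_cast; ring
    rw [h1, Real.rpow_add (by positivity), Real.rpow_natCast]
  have hfac : ((m+1).factorial : ℝ) = (m + 1) * m.factorial := by
    rw [Nat.factorial_succ]; push_cast; ring
  have hGpos := gamma_pos k hk m
  have hfacpos : (0:ℝ) < m.factorial := by positivity
  unfold bterm
  rw [hG, hpow, hfac, pow_succ]
  have hne1 : ((m : ℝ) + k + 1) ≠ 0 := by have : (0:ℝ) ≤ m := Nat.cast_nonneg m; intro h; linarith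
  have hne2 : ((m : ℝ) + 1) ≠ 0 := by positivity
  field_simp

lemma summable_bterm (k r : ℝ) (hk : -1 < k) (hr : 0 < r) : Summable (bterm k r) := by
  apply summable_of_ratio_norm_eventually_le (r := 1/2) (by norm_num)
  have h := Filter.eventually_ge_atTop (⌈2 * (r/2)^2⌉₊ + 1)
  filter_upwards [h] with m hm
  rw [bterm_succ k r hk hr m, norm_mul]
  have hmr : (2 : ℝ) * (r/2)^2 ≤ m := by
    calc (2:ℝ) * (r/2)^2 ≤ ⌈2 * (r/2)^2⌉₊ := Nat.le_ceil _
    _ ≤ m := by exact_mod_cast Nat.le_of_succ_le hm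
  have hm1 : (1:ℝ) ≤ m := by
    have : 1 ≤ m := by omega
    exact_mod_cast this
  have hden : (0:ℝ) < ((m:ℝ) + 1) * ((m:ℝ) + k + 1) := by
    have : (0:ℝ) ≤ m := Nat.cast_nonneg m
    apply mul_pos <;> linarith
  have hq : ‖-((r/2)^2) / (((m:ℝ) + 1) * ((m:ℝ) + k + 1))‖ ≤ 1/2 := by
    rw [norm_div, norm_neg, Real.norm_of_nonneg (by positivity),
      Real.norm_of_nonneg hden.le]
    rw [div_le_iff₀ hden]
    have h1 : (m:ℝ) ≤ ((m:ℝ) + 1) * ((m:ℝ) + k + 1) := by nlinarith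
    nlinarith
  calc ‖bterm k r m‖ * ‖-((r/2)^2) / (((m:ℝ) + 1) * ((m:ℝ) + k + 1))‖
      ≤ ‖bterm k r m‖ * (1/2) := by
        exact mul_le_mul_of_nonneg_left hq (norm_nonneg _)
    _ = 1/2 * ‖bterm k r m‖ := by ring

lemma bterm_key (k r : ℝ) (hk : -1 < k) (hr : 0 < r) (m : ℕ) :
    2 * (k + 1) * bterm (k + 1) r (m + 1) - r * bterm k r (m + 1) = r * bterm (k + 2) r m := by
  have hGp := gamma_pos k hk m
  set G := Real.Gamma ((m : ℝ) + k + 1) with hGdef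
  have hpos : (0:ℝ) < (m : ℝ) + k + 1 := by have : (0:ℝ) ≤ m := Nat.cast_nonneg m; linarith
  have hG1 : Real.Gamma ((↑(m+1) : ℝ) + k + 1) = ((m : ℝ) + k + 1) * G := by
    have h1 : ((↑(m+1) : ℝ) + k + 1) = ((m : ℝ) + k + 1) + 1 := by push_cast; ring
    rw [h1, Real.Gamma_add_one (ne_of_gt hpos)]
  have hG2 : Real.Gamma ((↑(m+1) : ℝ) + (k+1) + 1) = ((m : ℝ) + k + 2) * (((m : ℝ) + k + 1) * G) := by
    have h1 : ((↑(m+1) : ℝ) + (k+1) + 1) = (((m : ℝ) + k + 1) + 1) + 1 := by push_cast; ring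
    rw [h1, Real.Gamma_add_one (by positivity), Real.Gamma_add_one (ne_of_gt hpos)]
    ring
  have hG3 : Real.Gamma ((m : ℝ) + (k+2) + 1) = ((m : ℝ) + k + 2) * (((m : ℝ) + k + 1) * G) := by
    have h1 : ((m : ℝ) + (k+2) + 1) = (((m : ℝ) + k + 1) + 1) + 1 := by push_cast; ring
    rw [h1, Real.Gamma_add_one (by positivity), Real.Gamma_add_one (ne_of_gt hpos)]
    ring
  set X := (r/2 : ℝ) ^ ((2 * (m:ℝ)) + k) with hXdef
  have hXpos : 0 < X := Real.rpow_pos_of_pos (by positivity) _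
  have hp1 : (r/2 : ℝ) ^ ((2 * (↑(m+1) : ℝ)) + (k+1)) = X * (r/2)^(3:ℕ) := by
    have h1 : (2 * (↑(m+1) : ℝ)) + (k+1) = ((2 * (m:ℝ)) + k) + (3:ℕ) := by push_cast; ring
    rw [h1, Real.rpow_add (by positivity), Real.rpow_natCast]
  have hp2 : (r/2 : ℝ) ^ ((2 * (↑(m+1) : ℝ)) + k) = X * (r/2)^(2:ℕ) := by
    have h1 : (2 * (↑(m+1) : ℝ)) + k = ((2 * (m:ℝ)) + k) + (2:ℕ) := by push_cast; ring
    rw [h1, Real.rpow_add (by positivity), Real.rpow_natCast]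
  have hp3 : (r/2 : ℝ) ^ ((2 * (m:ℝ)) + (k+2)) = X * (r/2)^(2:ℕ) := by
    have h1 : (2 * (m:ℝ)) + (k+2) = ((2 * (m:ℝ)) + k) + (2:ℕ) := by push_cast; ring
    rw [h1, Real.rpow_add (by positivity), Real.rpow_natCast]
  have hfac : ((m+1).factorial : ℝ) = (m + 1) * m.factorial := by
    rw [Nat.factorial_succ]; push_cast; ring
  have hfacpos : (0:ℝ) < m.factorial := by positivity
  unfold bterm
  rw [hG1, hG2, hG3, hp1, hp2, hp3, hfac, pow_succ]
  have hne1 : ((m : ℝ) + k + 1) ≠ 0 := ne_of_gt hpos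
  have hne2 : ((m : ℝ) + k + 2) ≠ 0 := by intro h; linarith
  have hne3 : ((m : ℝ) + 1) ≠ 0 := by positivity
  have hGne : G ≠ 0 := ne_of_gt hGp
  field_simp
  ring

lemma bterm_zero (k r : ℝ) (hk : -1 < k) (hr : 0 < r) :
    2 * (k + 1) * bterm (k + 1) r 0 - r * bterm k r 0 = 0 := by
  have hpos : (0:ℝ) < k + 1 := by linarith
  have hG : Real.Gamma ((0:ℕ) + (k+1) + 1) = (k + 1) * Real.Gamma ((0:ℕ) + k + 1) := by
    have h1 : ((0:ℕ) : ℝ) + (k+1) + 1 = (((0:ℕ) : ℝ) + k + 1) + 1 := by ring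
    rw [h1, Real.Gamma_add_one (by push_cast; intro h; linarith)]
    push_cast; ring
  have hGp := gamma_pos k hk 0
  have hp : (r/2 : ℝ) ^ ((2 * ((0:ℕ):ℝ)) + (k+1)) = (r/2) ^ ((2 * ((0:ℕ):ℝ)) + k) * (r/2) := by
    have h1 : (2 * ((0:ℕ):ℝ)) + (k+1) = ((2 * ((0:ℕ):ℝ)) + k) + 1 := by ring
    rw [h1, Real.rpow_add (by positivity), Real.rpow_one]
  unfold bterm
  rw [hG, hp]
  have hGne : Real.Gamma (((0:ℕ):ℝ) + k + 1) ≠ 0 := ne_of_gt hGp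
  simp only [Nat.factorial_zero, Nat.cast_one, pow_zero]
  field_simp
  ring

lemma besselJ_rec (k r : ℝ) (hk : -1 < k) (hr : 0 < r) :
    r * besselJ (k + 2) r = 2 * (k + 1) * besselJ (k + 1) r - r * besselJ k r := by
  have hs0 := summable_bterm k r hk hr
  have hs1 := summable_bterm (k+1) r (by linarith) hr
  have hs2 := summable_bterm (k+2) r (by linarith) hr
  have hG : Summable (fun m => 2 * (k + 1) * bterm (k + 1) r m - r * bterm k r m) :=
    (hs1.mul_left _).sub (hs0.mul_left _)
  have h1 : 2 * (k + 1) * besselJ (k + 1) r - r * besselJ k r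
      = ∑' m, (2 * (k + 1) * bterm (k + 1) r m - r * bterm k r m) := by
    rw [Summable.tsum_sub (hs1.mul_left _) (hs0.mul_left _), tsum_mul_left, tsum_mul_left,
      besselJ_eq_tsum, besselJ_eq_tsum]
  rw [h1, Summable.tsum_eq_zero_add hG, bterm_zero k r hk hr, zero_add]
  rw [besselJ_eq_tsum, ← tsum_mul_left]
  exact (tsum_congr fun m => (bterm_key k r hk hr m)).symm

/-- Identity expressing `r⁵ J_{k+6}(r)` via `J_k` and `J_{k+1}`. -/
theorem besselJ_identity_six (k r : ℝ) (hk : -1 < k) (hr : 0 < r) :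
    r ^ 5 * besselJ (k + 6) r =
      (16 * (k + 5) * (k + 4) * (k + 3) * (k + 2) - 12 * (k + 3) * (k + 4) * r ^ 2 + r ^ 4) *
          (2 * (k + 1) * besselJ (k + 1) r - r * besselJ k r) -
        4 * (k + 4) * (2 * (k + 3) * (k + 5) - r ^ 2) * r ^ 2 * besselJ (k + 1) r := by
  have h2 := besselJ_rec k r hk hr
  have h3 := besselJ_rec (k+1) r (by linarith) hr
  have h4 := besselJ_rec (k+2) r (by linarith) hr
  have h5 := besselJ_rec (k+3) r (by linarith) hr
  have h6 := besselJ_rec (k+4) r (by linarith) hr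
  rw [show k+1+2 = k+3 by ring, show k+1+1 = k+2 by ring] at h3
  rw [show k+2+2 = k+4 by ring, show k+2+1 = k+3 by ring] at h4
  rw [show k+3+2 = k+5 by ring, show k+3+1 = k+4 by ring] at h5
  rw [show k+4+2 = k+6 by ring, show k+4+1 = k+5 by ring] at h6
  linear_combination r^4 * h6 + 2*(k+5)*r^3 * h5 + (4*(k+5)*(k+4)*r^2 - r^4) * h4
    + (8*(k+3)*(k+4)*(k+5)*r - 4*(k+4)*r^3) * h3
    + (16*(k+5)*(k+4)*(k+3)*(k+2) - 12*(k+3)*(k+4)*r^2 + r^4) * h2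
end
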